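/- arXiv:1905.09071 — 5 statements merged into one kernel-verified Lean document; each statement's English description precedes it below -/
import Mathlib

section
/- For every D-dimensional tensor C^{(D)} of sizes N×...×N with elements C^{(D)}_{i_1,...,i_D} = Σ_{σ ∈ S_D} ∏_{k=1}^D i_{σ(k)}^{μ_k}, there exist cores H^{(λ)} ∈ ℝ^{R_{λ−1} × N × R_λ} with ranks R_λ = C(D, λ) (so R_0 = R_D = 1) such that C^{(D)}_{i_1,...,i_D} = Σ_{r_1,...,r_{D−1}} H^{(1)}_{1, i_1, r_1} H^{(2)}_{r_1, i_2, r_2} ⋯ H^{(D)}_{r_{D−1}, i_D, 1}. In particular, the TT-ranks of C^{(D)} satisfy R_λ ≤ C(D, λ) for all 0 ≤ λ ≤ D. -/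
/-- Product of TT-cores `H^{(1)}(i₁) ⋯ H^{(D)}(i_D)` as a matrix of size `R 0 × R D`. -/
def ttProd (N : ℕ) (R : ℕ → ℕ)
    (H : (lam : ℕ) → Fin N → Matrix (Fin (R lam)) (Fin (R (lam + 1))) ℝ) :
    (D : ℕ) → (Fin D → Fin N) → Matrix (Fin (R 0)) (Fin (R D)) ℝ
  | 0, _ => 1
  | D + 1, i => ttProd N R H D (fun k => i k.castSucc) * H D (i (Fin.last D))

/-!
The tensor entry `C^{(D)}_{i}` is the permanent of the `D × D` matrix `M k m = (i_k + 1)^{μ_m}`.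
Expand the permanent row by row: after the first `λ` rows the partial sum only depends on the
set `S` of columns used so far (it is the permanent of the `λ × S` submatrix), and row `λ + 1`
passes from `S` to `S ∪ {t}` with weight `M (λ + 1) t`. The transfer matrices of this expansion,
with rows and columns indexed by the `λ`- and `(λ + 1)`-subsets of the columns, are TT-cores of
ranks `C(D, λ)`.
-/

open Finset

namespace Fin.Embedding

variable {α : Type*} [DecidableEq α]

lemma map_univ_init {n : ℕ} (τ : Fin (n + 1) ↪ α) :
    univ.map (init τ) = (univ.map τ).erase (τ (Fin.last n)) := by
  ext a
  simp only [mem_map, mem_univ, true_and, mem_erase]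
  constructor
  · rintro ⟨k, rfl⟩
    exact ⟨τ.injective.ne (Fin.castSucc_lt_last k).ne, k.castSucc, rfl⟩
  · rintro ⟨hne, k, rfl⟩
    induction k using Fin.lastCases with
    | last => exact absurd rfl hne
    | cast k => exact ⟨k, rfl⟩

lemma map_univ_snoc {n : ℕ} (τ : Fin n ↪ α) {a : α} (ha : a ∉ Set.range τ) :
    univ.map (snoc τ ha) = insert a (univ.map τ) := by
  ext b
  simp [Fin.exists_fin_succ', or_comm, eq_comm]

lemma notMem_range_of_map_univ_eq_erase {n : ℕ} {τ : Fin n ↪ α} {T : Finset α} {t : α}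
    (h : univ.map τ = T.erase t) : t ∉ Set.range τ := by
  rintro ⟨k, rfl⟩
  simpa [h] using mem_map_of_mem τ (mem_univ k)

end Fin.Embedding

section SubPermanent

variable {α R : Type*} [Fintype α] [DecidableEq α] [CommSemiring R]

noncomputable def subPermanent {n : ℕ} (A : Fin n → α → R) (S : Finset α) : R :=
  ∑ τ : Fin n ↪ α with univ.map τ = S, ∏ k, A k (τ k)

theorem subPermanent_zero (A : Fin 0 → α → R) (S : Finset α) :
    subPermanent A S = if S = ∅ then 1 else 0 := by
  simp only [subPermanent, univ_eq_empty, map_empty, eq_comm (a := ∅), univ_unique,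
    prod_empty]
  split_ifs <;> simp [*]

theorem subPermanent_succ {n : ℕ} (A : Fin (n + 1) → α → R) (T : Finset α) :
    subPermanent A T =
      ∑ t ∈ T, subPermanent (fun k => A k.castSucc) (T.erase t) * A (Fin.last n) t := by
  simp only [subPermanent, sum_mul]
  rw [sum_sigma']
  refine sum_bij' (fun τ _ => ⟨τ (Fin.last n), Fin.Embedding.init τ⟩)
    (fun p hp => Fin.Embedding.snoc p.2 (Fin.Embedding.notMem_range_of_map_univ_eq_erase
      (mem_filter.mp (mem_sigma.mp hp).2).2)) ?_ ?_ ?_ ?_ ?_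
  · intro τ hτ
    obtain rfl := (mem_filter.mp hτ).2
    simp [Fin.Embedding.map_univ_init]
  · intro p hp
    rw [mem_sigma, mem_filter] at hp
    simp only [mem_filter, mem_univ, true_and, Fin.Embedding.map_univ_snoc, hp.2.2,
      insert_erase hp.1]
  · intro τ _
    ext k
    induction k using Fin.lastCases with
    | last => exact Fin.Embedding.snoc_last
    | cast k => exact Fin.Embedding.snoc_castSucc
  · intro p _
    exact Sigma.ext Fin.Embedding.snoc_last (heq_of_eq (Fin.Embedding.init_snoc _ _))
  · intro τ _
    exact Fin.prod_univ_castSucc _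

theorem subPermanent_univ {n : ℕ} (A : Fin n → Fin n → R) :
    subPermanent A univ = (Matrix.of A).permanent := by
  rw [← Matrix.permanent_transpose, Matrix.permanent, subPermanent]
  simp only [univ_map_embedding, filter_true]
  exact Fintype.sum_equiv (Equiv.embeddingEquivOfFinite _) _ _ fun τ => rfl

def subsetCore (v : α → R) (l : ℕ) :
    Matrix {S : Finset α // #S = l} {T : Finset α // #T = l + 1} R :=
  Matrix.of fun S T => ∑ t ∈ T.1, if S.1 = T.1.erase t then v t else 0

theorem sum_mul_subsetCore (f : Finset α → R) (v : α → R) {l : ℕ}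
    (T : {T : Finset α // #T = l + 1}) :
    ∑ S, f S.1 * subsetCore v l S T = ∑ t ∈ T.1, f (T.1.erase t) * v t := by
  simp only [subsetCore, Matrix.of_apply, mul_sum]
  rw [sum_comm]
  refine sum_congr rfl fun t ht => ?_
  rw [sum_eq_single ⟨T.1.erase t, by rw [card_erase_of_mem ht, T.2]; rfl⟩]
  · simp
  · intro S _ hS
    rw [if_neg fun h => hS (Subtype.ext h), mul_zero]
  · simp

end SubPermanent

section TensorTrain

variable {α : Type*} [Fintype α] [DecidableEq α] {D : ℕ}

noncomputable def subsetEquivFin (hα : Fintype.card α = D) (l : ℕ) :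
    {S : Finset α // #S = l} ≃ Fin (D.choose l) :=
  Fintype.equivFinOfCardEq (by rw [Fintype.card_finset_len, hα])

noncomputable def subsetCores (hα : Fintype.card α = D) {N : ℕ} (v : Fin N → α → ℝ) (l : ℕ)
    (x : Fin N) : Matrix (Fin (D.choose l)) (Fin (D.choose (l + 1))) ℝ :=
  Matrix.reindex (subsetEquivFin hα l) (subsetEquivFin hα (l + 1)) (subsetCore (v x) l)

theorem ttProd_subsetCores_apply (hα : Fintype.card α = D) {N : ℕ} (v : Fin N → α → ℝ)
    (l : ℕ) (i : Fin l → Fin N) (r : Fin (D.choose 0)) (c : Fin (D.choose l)) :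
    ttProd N (fun lam => D.choose lam) (subsetCores hα v) l i r c
      = subPermanent (fun k => v (i k)) ((subsetEquivFin hα l).symm c).1 := by
  induction l with
  | zero =>
    rw [subPermanent_zero, if_pos (card_eq_zero.mp ((subsetEquivFin hα 0).symm c).2)]
    have hr : (r : ℕ) < 1 := r.isLt.trans_eq (Nat.choose_zero_right D)
    have hc : (c : ℕ) < 1 := c.isLt.trans_eq (Nat.choose_zero_right D)
    obtain rfl : r = c := Fin.ext (by omega)
    exact Matrix.one_apply_eq r
  | succ l ih =>
    rw [ttProd, Matrix.mul_apply, ← (subsetEquivFin hα l).sum_comp]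
    simp only [ih, subsetCores, Matrix.reindex_apply, Matrix.submatrix_apply,
      Equiv.symm_apply_apply]
    rw [sum_mul_subsetCore, subPermanent_succ]

end TensorTrain

theorem brownian_tt_decomposition_general (D N : ℕ) (μ : Fin D → ℝ) :
    ∃ H : (lam : ℕ) → Fin N → Matrix (Fin (D.choose lam)) (Fin (D.choose (lam + 1))) ℝ,
      ∀ i : Fin D → Fin N,
        ttProd N (fun lam => D.choose lam) H D i
            ⟨0, Nat.choose_pos (Nat.zero_le D)⟩ ⟨0, Nat.choose_pos le_rfl⟩
          = ∑ σ : Equiv.Perm (Fin D), ∏ k, (((i (σ k) : ℕ) : ℝ) + 1) ^ (μ k) := by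
  refine ⟨subsetCores (Fintype.card_fin D) fun x m => ((x : ℕ) + 1 : ℝ) ^ μ m, fun i => ?_⟩
  have hfull :
      ((subsetEquivFin (Fintype.card_fin D) D).symm ⟨0, Nat.choose_pos le_rfl⟩).1 = univ :=
    eq_univ_of_card _ (((subsetEquivFin _ D).symm _).2.trans (Fintype.card_fin D).symm)
  rw [ttProd_subsetCores_apply, hfull, subPermanent_univ]
  rfl

/-- The generalized Brownian tensor `C^{(D)}_{i₁,...,i_D} = Σ_σ Π_k i_{σ(k)}^{μ_k}` admits a
TT-decomposition with ranks `R_λ = C(D,λ)` (so `R_0 = R_D = 1`); in particular its TT-ranks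
satisfy `R_λ ≤ C(D,λ)`. -/
theorem brownian_tt_decomposition (D N : ℕ) (hD : 1 ≤ D) (μ : Fin D → ℝ) :
    ∃ H : (lam : ℕ) → Fin N → Matrix (Fin (D.choose lam)) (Fin (D.choose (lam + 1))) ℝ,
      ∀ i : Fin D → Fin N,
        ttProd N (fun lam => D.choose lam) H D i
            ⟨0, Nat.choose_pos (Nat.zero_le D)⟩ ⟨0, Nat.choose_pos le_rfl⟩
          = ∑ σ : Equiv.Perm (Fin D), ∏ k, (((i (σ k) : ℕ) : ℝ) + 1) ^ (μ k) :=
  brownian_tt_decomposition_general D N μ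
end

section
/- Induction step of the TT construction: suppose for some 1 ≤ λ ≤ D−1 the partial contraction of cores H^{(1)},...,H^{(λ)} at rank index r_λ equals C^{(λ)}_{i_1,...,i_λ}[μ_{s_1},...,μ_{s_λ}] where (s_1 < ... < s_λ) is the increasing tuple encoded by r_λ. Define H^{(λ+1)}_{r_λ, i, r_{λ+1}} := i^{μ_t} if the tuple encoded by r_{λ+1} equals the tuple of r_λ with the single element t inserted, and 0 otherwise. Then the partial contraction of H^{(1)},...,H^{(λ+1)} at rank index r_{λ+1} equals C^{(λ+1)}_{i_1,...,i_{λ+1}}[μ_{s'_1},...,μ_{s'_{λ+1}}], where (s'_1 < ... < s'_{λ+1}) is the tuple encoded by r_{λ+1}. -/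
/-- `C^{(λ)}_{x₁,...,x_λ}[μs] = Σ_{σ ∈ S_λ} Π_k x_{σ(k)}^{μs_k}`. -/
noncomputable def CC (lam : ℕ) (μs : Fin lam → ℝ) (x : Fin lam → ℕ) : ℝ :=
  ∑ σ : Equiv.Perm (Fin lam), ∏ k, ((x (σ k) : ℝ)) ^ (μs k)

open Finset Equiv

lemma CC_sym (n : ℕ) (μs : Fin n → ℝ) (x : Fin n → ℕ) :
    CC n μs x = ∑ σ : Equiv.Perm (Fin n), ∏ k, ((x k : ℝ)) ^ (μs (σ k)) := by
  unfold CC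
  rw [← Equiv.sum_comp (Equiv.inv (Equiv.Perm (Fin n)))
      (fun σ => ∏ k, ((x (σ k) : ℝ)) ^ (μs k))]
  refine Finset.sum_congr rfl fun σ _ => ?_
  rw [← Equiv.prod_comp σ (fun j => ((x ((Equiv.inv (Equiv.Perm (Fin n)) σ) j) : ℝ)) ^ (μs j))]
  simp [Equiv.inv]

lemma CC_right (n : ℕ) (μs : Fin n → ℝ) (x : Fin n → ℕ) (π : Equiv.Perm (Fin n)) :
    CC n μs (fun k => x (π k)) = CC n μs x := by
  unfold CC
  exact Fintype.sum_equiv (Equiv.mulLeft π) _ _ (fun σ => by simp [Equiv.Perm.mul_apply])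

lemma exists_perm_factor {n : ℕ} (f : Fin n → Fin (n + 1)) (hf : Function.Injective f)
    (p : Fin (n + 1)) (hp : ∀ i, f i ≠ p) :
    ∃ π : Equiv.Perm (Fin n), ∀ i, f i = p.succAbove (π i) := by
  have h : ∀ i, ∃ j, p.succAbove j = f i := fun i => Fin.exists_succAbove_eq (hp i)
  choose g hg using h
  have hginj : Function.Injective g := fun a b hab => hf (by rw [← hg a, ← hg b, hab])
  exact ⟨Equiv.ofBijective g (Finite.injective_iff_bijective.mp hginj), fun i => (hg i).symm⟩

lemma CC_split_zero (n : ℕ) (μs : Fin (n + 1) → ℝ) (x : Fin (n + 1) → ℕ) :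
    CC (n + 1) μs x = ∑ p : Fin (n + 1),
      ((x 0 : ℝ)) ^ (μs p) * CC n (fun k => μs (p.succAbove k)) (fun k => x k.succ) := by
  rw [CC_sym]
  rw [← Equiv.sum_comp (Equiv.Perm.decomposeFin (n := n)).symm
      (fun σ => ∏ k, ((x k : ℝ)) ^ (μs (σ k)))]
  rw [Fintype.sum_prod_type]
  refine Finset.sum_congr rfl fun p _ => ?_
  have hsplit : ∀ e : Equiv.Perm (Fin n),
      (∏ k, ((x k : ℝ)) ^ (μs ((Equiv.Perm.decomposeFin.symm (p, e)) k)))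
      = ((x 0 : ℝ)) ^ (μs p) *
        ∏ i : Fin n, ((x i.succ : ℝ)) ^ (μs (Equiv.swap 0 p (e i).succ)) := by
    intro e
    rw [Fin.prod_univ_succ]
    simp [Equiv.Perm.decomposeFin_symm_apply_zero, Equiv.Perm.decomposeFin_symm_apply_succ]
  simp only [hsplit, ← Finset.mul_sum]
  congr 1
  obtain ⟨π, hπ⟩ := exists_perm_factor (fun i : Fin n => Equiv.swap 0 p i.succ)
    (fun a b hab => Fin.succ_injective _ ((Equiv.swap 0 p).injective hab)) p
    (fun i h => by
      have h2 : (i.succ : Fin (n + 1)) = 0 := by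
        have := congrArg (Equiv.swap 0 p) h
        simpa using this
      exact Fin.succ_ne_zero i h2)
  rw [CC_sym]
  refine (Fintype.sum_equiv (Equiv.mulLeft π⁻¹) _ _ (fun e => ?_)).symm
  refine Finset.prod_congr rfl fun i _ => ?_
  simp [hπ, Equiv.Perm.mul_apply]

lemma CC_split_last (n : ℕ) (μs : Fin (n + 1) → ℝ) (x : Fin (n + 1) → ℕ) :
    CC (n + 1) μs x = ∑ p : Fin (n + 1),
      ((x (Fin.last n) : ℝ)) ^ (μs p) * CC n (fun k => μs (p.succAbove k))
        (fun k => x k.castSucc) := by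
  have h1 : CC (n + 1) μs x = CC (n + 1) μs (fun k => x (Fin.revPerm k)) :=
    (CC_right _ _ _ _).symm
  rw [h1, CC_split_zero]
  refine Finset.sum_congr rfl fun p _ => ?_
  simp only [Fin.revPerm_apply]
  have h2 : (fun k : Fin n => x (Fin.rev k.succ))
      = fun k => x (Fin.castSucc (Fin.rev k)) := by
    funext k; rw [Fin.rev_succ]
  have h3 : CC n (fun k => μs (p.succAbove k)) (fun k => x (Fin.castSucc (Fin.rev k)))
      = CC n (fun k => μs (p.succAbove k)) (fun k => x (Fin.castSucc k)) :=
    CC_right n _ (fun k => x (Fin.castSucc k)) Fin.revPerm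
  rw [Fin.rev_zero, h2, h3]

lemma orderEmbOfFin_erase {D n : ℕ} (S : Finset (Fin D)) (h : S.card = n + 1)
    (p : Fin (n + 1))
    (h' : (S.erase (S.orderEmbOfFin h p)).card = n) (k : Fin n) :
    (S.erase (S.orderEmbOfFin h p)).orderEmbOfFin h' k
      = S.orderEmbOfFin h (p.succAbove k) := by
  have := Finset.orderEmbOfFin_unique h'
    (f := fun k : Fin n => S.orderEmbOfFin h (p.succAbove k))
    (fun k => Finset.mem_erase.mpr
      ⟨fun hc => Fin.succAbove_ne p k ((S.orderEmbOfFin h).injective hc),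
       Finset.orderEmbOfFin_mem S h _⟩)
    ((S.orderEmbOfFin h).strictMono.comp (Fin.strictMono_succAbove p))
  exact (congrFun this k).symm

/-- Induction step of the TT construction: if the partial contraction at rank index `r_λ`
equals `C^{(λ)}[μ_S]` for the `λ`-subset `S` encoded by `r_λ`, and the next core
`H^{(λ+1)}_{r_λ, i, r_{λ+1}}` equals `i^{μ_t}` when the subset encoded by `r_{λ+1}` is the
subset of `r_λ` with one element `t` inserted (and `0` otherwise), then the partial
contraction at rank index `r_{λ+1}` equals `C^{(λ+1)}[μ_{S'}]` for the subset `S'` encoded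
by `r_{λ+1}`. -/
theorem tt_induction_step (D N lam : ℕ) (hlam1 : 1 ≤ lam) (hlam : lam ≤ D - 1)
    (μ : Fin D → ℝ)
    (enc : ∀ l, Fin (D.choose l) ≃ {S : Finset (Fin D) // S.card = l})
    (P : Fin (D.choose lam) → (Fin lam → Fin N) → ℝ)
    (hP : ∀ r i, P r i
      = CC lam (fun k => μ ((enc lam r).1.orderEmbOfFin (enc lam r).2 k))
          (fun k => (i k : ℕ) + 1))
    (H : Fin (D.choose lam) → Fin N → Fin (D.choose (lam + 1)) → ℝ)
    (hH : ∀ r i r', H r i r'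
      = if h : ∃ t, t ∉ (enc lam r).1 ∧ insert t (enc lam r).1 = (enc (lam + 1) r').1
        then (((i : ℕ) : ℝ) + 1) ^ (μ h.choose) else 0) :
    ∀ (r' : Fin (D.choose (lam + 1))) (i : Fin (lam + 1) → Fin N),
      (∑ r, P r (fun k => i k.castSucc) * H r (i (Fin.last lam)) r')
        = CC (lam + 1)
            (fun k => μ ((enc (lam + 1) r').1.orderEmbOfFin (enc (lam + 1) r').2 k))
            (fun k => (i k : ℕ) + 1) := by
  intro r' i
  have hS' : (enc (lam + 1) r').1.card = lam + 1 := (enc (lam + 1) r').2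
  set S' : Finset (Fin D) := (enc (lam + 1) r').1 with hS'def
  set x : Fin (lam + 1) → ℕ := fun k => (i k : ℕ) + 1 with hx
  set G : {S : Finset (Fin D) // S.card = lam} → ℝ := fun S =>
    CC lam (fun k => μ (S.1.orderEmbOfFin S.2 k)) (fun k => x k.castSucc) *
      (if h : ∃ t, t ∉ S.1 ∧ insert t S.1 = S'
        then (((i (Fin.last lam) : ℕ) : ℝ) + 1) ^ (μ h.choose) else 0) with hG
  have hstep : ∀ r, P r (fun k => i k.castSucc) * H r (i (Fin.last lam)) r'
      = G (enc lam r) := by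
    intro r
    rw [hP, hH, hG]
  rw [Finset.sum_congr rfl fun r _ => hstep r, Equiv.sum_comp (enc lam) G,
    CC_split_last]
  -- the embedding t = S'.orderEmbOfFin hS' p ↦ S'.erase t
  have hmem : ∀ p : Fin (lam + 1), S'.orderEmbOfFin hS' p ∈ S' :=
    fun p => Finset.orderEmbOfFin_mem S' hS' p
  set E : Fin (lam + 1) → {S : Finset (Fin D) // S.card = lam} := fun p =>
    ⟨S'.erase (S'.orderEmbOfFin hS' p), by
      simp [Finset.card_erase_of_mem (hmem p), hS']⟩ with hE
  have hEinj : ∀ p q : Fin (lam + 1), E p = E q → p = q := by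
    intro p q hpq
    have h1 : S'.erase (S'.orderEmbOfFin hS' p) = S'.erase (S'.orderEmbOfFin hS' q) :=
      congrArg Subtype.val hpq
    have h2 : S'.orderEmbOfFin hS' p = S'.orderEmbOfFin hS' q := by
      by_contra hne
      have : S'.orderEmbOfFin hS' p ∈ S'.erase (S'.orderEmbOfFin hS' q) :=
        Finset.mem_erase.mpr ⟨hne, hmem p⟩
      rw [← h1] at this
      exact (Finset.notMem_erase _ _) this
    exact (S'.orderEmbOfFin hS').injective h2
  refine (Finset.sum_of_injOn E (fun p _ q _ h => hEinj p q h) (fun p _ => Finset.mem_coe.mpr (Finset.mem_univ _))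
    ?_ ?_).symm
  · -- vanishing outside the image
    intro S _ hS
    rw [hG]
    by_cases hc : ∃ t, t ∉ S.1 ∧ insert t S.1 = S'
    · exfalso
      obtain ⟨t, ht1, ht2⟩ := hc
      have htS' : t ∈ S' := by rw [← ht2]; exact Finset.mem_insert_self _ _
      have : t ∈ Set.range (S'.orderEmbOfFin hS') := by
        rw [Finset.range_orderEmbOfFin]; exact htS'
      obtain ⟨p, hp⟩ := this
      refine hS ⟨p, Finset.mem_coe.mpr (Finset.mem_univ _), ?_⟩
      refine Subtype.ext ?_
      show S'.erase (S'.orderEmbOfFin hS' p) = S.1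
      rw [hp, ← ht2, Finset.erase_insert ht1]
    · simp only [dif_neg hc, mul_zero]
  · -- pointwise values
    intro p _
    rw [hG]
    dsimp only
    have hpos : ∃ t, t ∉ (E p).1 ∧ insert t (E p).1 = S' :=
      ⟨S'.orderEmbOfFin hS' p, Finset.notMem_erase _ _,
        Finset.insert_erase (hmem p)⟩
    rw [dif_pos hpos]
    have hch : hpos.choose = S'.orderEmbOfFin hS' p := by
      have hc := hpos.choose_spec
      by_contra hne
      have hmem' : hpos.choose ∈ S' := by
        have h5 := Finset.mem_insert_self hpos.choose (E p).1
        rw [hc.2] at h5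
        exact h5
      have : hpos.choose ∈ (E p).1 := Finset.mem_erase.mpr ⟨hne, hmem'⟩
      exact hc.1 this
    have hCC : (fun k => μ ((E p).1.orderEmbOfFin (E p).2 k))
        = fun k => μ (S'.orderEmbOfFin hS' (p.succAbove k)) := by
      funext k
      rw [orderEmbOfFin_erase S' hS' p (E p).2 k]
    rw [hch, hCC, mul_comm]
    have hxlast : ((x (Fin.last lam) : ℝ)) = ((i (Fin.last lam) : ℕ) : ℝ) + 1 := by
      rw [hx]; push_cast; ring
    rw [hxlast]
end

section
/- The λ-th unfolding matrix of the generalized Brownian tensor has matrix rank at most C(D, λ): for each 0 ≤ λ ≤ D, the N^λ × N^{D−λ} matrix M with entries M_{(i_1,...,i_λ),(i_{λ+1},...,i_D)} = C^{(D)}_{i_1,...,i_D} satisfies rank(M) ≤ C(D, λ), because C^{(D)}_{i_1,...,i_D} = Σ_{S ⊆ {1,...,D}, |S| = λ} C^{(λ)}_{i_1,...,i_λ}[μ_S] · C^{(D−λ)}_{i_{λ+1},...,i_D}[μ_{S^c}], where μ_S denotes the parameters indexed by S in increasing order. -/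
/-!
`C^{(D)}_i` is the permanent of the matrix `((i_p + 1) ^ μ_l)_{p,l}`. Grouping the permutations `σ`
by the set `S` of columns that `σ` sends to the first `λ` rows, a permutation in the fibre of `S` is
the same as a bijection from `S` onto the first `λ` rows together with one from `Sᶜ` onto the
remaining rows: this is the Laplace expansion of the permanent along the first `λ` rows. Each of its
`C(D, λ)` terms is a function of `i_1, …, i_λ` times a function of `i_{λ+1}, …, i_D`, so the
unfolding matrix factors as `U * V` through an inner dimension of size `C(D, λ)`.
-/

/-- The `λ`-th unfolding matrix of a `D`-dimensional tensor with mode sizes `N`. -/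
def ttUnfold (D N lam : ℕ) (h : lam ≤ D) (T : (Fin D → Fin N) → ℝ) :
    Matrix (Fin lam → Fin N) (Fin (D - lam) → Fin N) ℝ :=
  Matrix.of fun a b => T fun k =>
    if h' : (k : ℕ) < lam then a ⟨k, h'⟩ else b ⟨(k : ℕ) - lam, by have := k.2; omega⟩

open Finset Equiv

section LaplaceExpansion

variable {α : Type*} {R : Type*} [CommSemiring R]

def Equiv.Perm.subtypeCongrEquiv (p q : α → Prop) [DecidablePred p] [DecidablePred q] :
    {σ : Perm α // ∀ a, p a ↔ q (σ a)} ≃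
      ({a // p a} ≃ {a // q a}) × ({a // ¬p a} ≃ {a // ¬q a}) where
  toFun σ := (σ.1.subtypeEquiv σ.2, σ.1.subtypeEquiv fun a => not_congr (σ.2 a))
  invFun ef := ⟨Equiv.subtypeCongr ef.1 ef.2, fun a => by
    by_cases h : p a <;> simp [Equiv.subtypeCongr, h, (ef.1 _).2, (ef.2 _).2]⟩
  left_inv σ := by ext a; by_cases h : p a <;> simp [Equiv.subtypeCongr, h]
  right_inv ef := by ext a <;> simp [Equiv.subtypeCongr, a.2]

theorem sum_equiv_prod_eq_sum_perm {X Y κ : Type*} [Fintype X] [DecidableEq X] [Fintype Y]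
    [DecidableEq Y] [Fintype κ] [DecidableEq κ]
    (c : κ ≃ X) (r : κ ≃ Y) (f : Y → X → R) :
    ∑ e : X ≃ Y, ∏ x, f (e x) x = ∑ τ : Perm κ, ∏ j, f (r (τ j)) (c j) := by
  rw [← (equivCongr c r).sum_comp]
  refine sum_congr rfl fun τ _ => ?_
  rw [← c.prod_comp]
  simp

variable [Fintype α] [DecidableEq α]

theorem sum_perm_prod_of_iff_eq_mul (p q : α → Prop) [DecidablePred p] [DecidablePred q]
    (f : α → α → R) :
    ∑ σ : {σ : Perm α // ∀ a, p a ↔ q (σ a)}, ∏ a, f (σ.1 a) a =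
      (∑ e : {a // p a} ≃ {a // q a}, ∏ a, f (e a) a) *
        ∑ e : {a // ¬p a} ≃ {a // ¬q a}, ∏ a, f (e a) a := by
  rw [Fintype.sum_mul_sum, ← Fintype.sum_prod_type', ← (Perm.subtypeCongrEquiv p q).sum_comp]
  refine sum_congr rfl fun σ _ => ?_
  rw [← Fintype.prod_subtype_mul_prod_subtype p]
  rfl

theorem sum_perm_prod_eq_sum_finset_mul (q : α → Prop) [DecidablePred q] (f : α → α → R) :
    ∑ σ : Perm α, ∏ a, f (σ a) a =
      ∑ S : Finset α, (∑ e : S ≃ {a // q a}, ∏ a, f (e a) a) *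
        ∑ e : {a // a ∉ S} ≃ {a // ¬q a}, ∏ a, f (e a) a := by
  rw [← sum_fiberwise univ (fun σ : Perm α => univ.filter fun a => q (σ a))]
  refine sum_congr rfl fun S _ => ?_
  rw [sum_subtype _ (p := fun σ : Perm α => ∀ a, a ∈ S ↔ q (σ a)) fun σ => ?_]
  · convert sum_perm_prod_of_iff_eq_mul (· ∈ S) q f
  · simp [Finset.ext_iff, eq_comm]

end LaplaceExpansion

def Fin.natAddLEquiv {n m : ℕ} (h : n ≤ m) : Fin (m - n) ≃ {i : Fin m // ¬(i : ℕ) < n} where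
  toFun i := ⟨⟨n + i, by omega⟩, by simp⟩
  invFun i := ⟨i.1 - n, by omega⟩
  left_inv i := by ext; simp
  right_inv i := by ext; simp; omega

theorem Matrix.permanent_eq_sum_permanent_mul_permanent {R : Type*} [CommSemiring R] {D lam : ℕ}
    (hlam : lam ≤ D) (M : Matrix (Fin D) (Fin D) R) :
    M.permanent = ∑ S : {S : Finset (Fin D) // S.card = lam},
      (M.submatrix (Fin.castLE hlam) (S.1.orderEmbOfFin S.2)).permanent *
        (M.submatrix (fun k : Fin (D - lam) => ⟨lam + k, by omega⟩)
          (S.1ᶜ.orderEmbOfFin (by simp [card_compl, S.2]))).permanent := by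
  rw [permanent, sum_perm_prod_eq_sum_finset_mul (fun i : Fin D => (i : ℕ) < lam) M,
    ← Fintype.sum_subtype_add_sum_subtype (fun S : Finset (Fin D) => S.card = lam),
    Fintype.sum_eq_zero (fun S : {S : Finset (Fin D) // S.card ≠ lam} => _), add_zero]
  · refine sum_congr rfl fun S _ => ?_
    congr 1
    · exact sum_equiv_prod_eq_sum_perm (S.1.orderIsoOfFin S.2).toEquiv (Fin.castLEquiv hlam)
        fun i j => M i j
    · exact sum_equiv_prod_eq_sum_perm
        ((S.1ᶜ.orderIsoOfFin (by simp [card_compl, S.2])).toEquiv.trans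
          (subtypeEquivRight fun _ => mem_compl)) (Fin.natAddLEquiv hlam) fun i j => M i j
  · intro S
    have : IsEmpty (S.1 ≃ {i : Fin D // (i : ℕ) < lam}) :=
      ⟨fun e => S.2 (by simpa using Fintype.card_congr (e.trans (Fin.castLEquiv hlam).symm))⟩
    simp

theorem Matrix.rank_le_card_of_eq_sum_mul {m n ι R : Type*} [Fintype n] [Fintype ι]
    [CommSemiring R] [StrongRankCondition R] (A : Matrix m n R) (u : m → ι → R) (v : ι → n → R)
    (h : ∀ a b, A a b = ∑ i, u a i * v i b) : A.rank ≤ Fintype.card ι := by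
  have hA : A = Matrix.of u * Matrix.of v := by ext a b; simp [Matrix.mul_apply, h]
  rw [hA]
  exact (Matrix.rank_mul_le_left _ _).trans (Matrix.rank_le_card_width _)

theorem ttUnfold_rank_le_card {D N lam : ℕ} {ι : Type*} [Fintype ι] (hlam : lam ≤ D)
    (T : (Fin D → Fin N) → ℝ) (u : ι → (Fin lam → Fin N) → ℝ)
    (v : ι → (Fin (D - lam) → Fin N) → ℝ)
    (hT : ∀ i, T i = ∑ s, u s (i ∘ Fin.castLE hlam) * v s (i ∘ fun k => ⟨lam + k, by omega⟩)) :
    (ttUnfold D N lam hlam T).rank ≤ Fintype.card ι := by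
  refine Matrix.rank_le_card_of_eq_sum_mul _ (fun a s => u s a) v fun a b => ?_
  simp only [ttUnfold, Matrix.of_apply, hT]
  congr! with s <;> funext k
  · exact dif_pos k.2
  · simp

/-- The index `i p : Fin N` stands for `i p + 1 ∈ {1, …, N}`. -/
noncomputable def brownianMatrix {ι κ : Type*} {N : ℕ} (i : ι → Fin N) (μ : κ → ℝ) :
    Matrix ι κ ℝ :=
  Matrix.of fun p l => (((i p : ℕ) : ℝ) + 1) ^ μ l

theorem brownianMatrix_submatrix {ι κ ι' κ' : Type*} {N : ℕ} (i : ι → Fin N) (μ : κ → ℝ)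
    (r : ι' → ι) (c : κ' → κ) :
    (brownianMatrix i μ).submatrix r c = brownianMatrix (i ∘ r) (μ ∘ c) :=
  rfl

/-- Splitting identity `C^{(D)} = Σ_{|S| = λ} C^{(λ)}[μ_S] ⊗ C^{(D-λ)}[μ_{Sᶜ}]`, and
consequently the `λ`-th unfolding of the generalized Brownian tensor has rank at most
`C(D,λ)`. -/
theorem brownian_unfolding_rank (D N lam : ℕ) (hlam : lam ≤ D)
    (μ : Fin D → ℝ) :
    (∀ i : Fin D → Fin N,
      (∑ σ : Equiv.Perm (Fin D), ∏ k, (((i (σ k) : ℕ) : ℝ) + 1) ^ (μ k))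
        = ∑ S : {S : Finset (Fin D) // S.card = lam},
            (∑ σ : Equiv.Perm (Fin lam),
              ∏ k, (((i ⟨σ k, lt_of_lt_of_le (σ k).2 hlam⟩ : ℕ) : ℝ) + 1)
                ^ (μ (S.1.orderEmbOfFin S.2 k)))
          * (∑ σ : Equiv.Perm (Fin (D - lam)),
              ∏ k, (((i ⟨lam + σ k, by have := (σ k).2; omega⟩ : ℕ) : ℝ) + 1)
                ^ (μ ((S.1ᶜ).orderEmbOfFin (by simp [Finset.card_compl, S.2]) k))))
    ∧ (ttUnfold D N lam hlam
        (fun i => ∑ σ : Equiv.Perm (Fin D), ∏ k, (((i (σ k) : ℕ) : ℝ) + 1) ^ (μ k))).rank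
        ≤ D.choose lam := by
  have expand (i : Fin D → Fin N) :=
    (brownianMatrix i μ).permanent_eq_sum_permanent_mul_permanent hlam
  refine ⟨expand, ?_⟩
  calc _ ≤ Fintype.card {S : Finset (Fin D) // S.card = lam} :=
        ttUnfold_rank_le_card hlam _
          (fun S x => (brownianMatrix x (μ ∘ S.1.orderEmbOfFin S.2)).permanent)
          (fun S y =>
            (brownianMatrix y (μ ∘ S.1ᶜ.orderEmbOfFin (by simp [card_compl, S.2]))).permanent)
          fun i => (expand i).trans (by simp only [brownianMatrix_submatrix])
    _ = D.choose lam := by simp [Fintype.card_finset_len]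
end

section
/- Given a TT-decomposition of the kernel C^{(d)} with ranks bounded by R, the loss term q^{(d)}_k[n] for all 1 ≤ k ≤ N can be expressed as q^{(d)}_k = −n_k · Σ_{r_{d−1}} G^{(d−1)}_{r_{d−1}} H^{(d)}_{r_{d−1},k,1}, where the vectors G^{(λ)} ∈ ℝ^{R_λ} are defined recursively by G^{(0)}_1 = 1 and G^{(λ)}_{r_λ} = Σ_{r_{λ−1}} G^{(λ−1)}_{r_{λ−1}} Σ_{i=1}^{N} H^{(λ)}_{r_{λ−1},i,r_λ} n_i; that is, the contraction identity Σ_{i_1,...,i_{d−1}} C^{(d)}_{i_1,...,i_{d−1},k} n_{i_1}⋯n_{i_{d−1}} = Σ_{r_{d−1}} G^{(d−1)}_{r_{d−1}} H^{(d)}_{r_{d−1},k,1} holds. -/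
/-- The recursively defined contraction vectors
`G^{(0)} = 1`, `G^{(λ)}_{r_λ} = Σ_{r_{λ-1}} G^{(λ-1)}_{r_{λ-1}} Σ_i H^{(λ)}_{r_{λ-1},i,r_λ} n_i`. -/
def Gvec (N : ℕ) (R : ℕ → ℕ)
    (H : (lam : ℕ) → Fin N → Matrix (Fin (R lam)) (Fin (R (lam + 1))) ℝ)
    (n : Fin N → ℝ) : (lam : ℕ) → Matrix (Fin (R 0)) (Fin (R lam)) ℝ
  | 0 => 1
  | lam + 1 => Gvec N R H n lam * ∑ i, n i • H lam i

lemma ttProd_key (N : ℕ) (R : ℕ → ℕ)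
    (H : (lam : ℕ) → Fin N → Matrix (Fin (R lam)) (Fin (R (lam + 1))) ℝ)
    (n : Fin N → ℝ) : ∀ D : ℕ,
    ∑ i : Fin D → Fin N, (∏ j, n (i j)) • ttProd N R H D i = Gvec N R H n D := by
  intro D
  induction D with
  | zero =>
      simp [ttProd, Gvec]
  | succ D ih =>
      rw [← (Fin.snocEquiv (fun _ : Fin (D+1) => Fin N)).sum_comp
        (fun i => (∏ j, n (i j)) • ttProd N R H (D+1) i)]
      rw [Fintype.sum_prod_type]
      have : ∀ (a : Fin N) (b : Fin D → Fin N),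
          (∏ j, n (Fin.snocEquiv (fun _ => Fin N) (a, b) j)) •
            ttProd N R H (D+1) (Fin.snocEquiv (fun _ => Fin N) (a, b))
          = ((∏ j, n (b j)) • ttProd N R H D b) * (n a • H D a) := by
        intro a b
        simp only [Fin.snocEquiv, Equiv.coe_fn_mk, ttProd, Fin.snoc_castSucc,
          Fin.snoc_last, Fin.prod_univ_castSucc]
        rw [Matrix.smul_mul, Matrix.mul_smul, smul_smul]
      simp only [this]
      rw [Finset.sum_comm]
      simp only [← Matrix.mul_sum]
      rw [← Matrix.sum_mul, ih]
      rfl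

/-- Contraction identity for the loss term: for a kernel in TT-format (`d = e + 1 ≥ 2`),
`Σ_{i₁,...,i_{d-1}} C^{(d)}_{i₁,...,i_{d-1},k} n_{i₁}⋯n_{i_{d-1}}
  = Σ_{r_{d-1}} G^{(d-1)}_{r_{d-1}} H^{(d)}_{r_{d-1},k,1}`. -/
theorem tt_loss_contraction (e N : ℕ) (he : 1 ≤ e) (R : ℕ → ℕ)
    (hR0 : R 0 = 1) (hRd : R (e + 1) = 1)
    (H : (lam : ℕ) → Fin N → Matrix (Fin (R lam)) (Fin (R (lam + 1))) ℝ)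
    (n : Fin N → ℝ) :
    ∀ k : Fin N,
      (∑ i : Fin e → Fin N,
        (∑ r0, ∑ rd, ttProd N R H (e + 1) (Fin.snoc i k) r0 rd) * ∏ j, n (i j))
        = ∑ r0, ∑ rd, (Gvec N R H n e * H e k) r0 rd := by
  intro k
  have key := ttProd_key N R H n e
  have hstep : ∀ i : Fin e → Fin N,
      ttProd N R H (e+1) (Fin.snoc i k) = ttProd N R H e i * H e k := by
    intro i
    simp [ttProd, Fin.snoc_castSucc, Fin.snoc_last]
  rw [← key]
  simp only [hstep, Finset.sum_mul, Matrix.sum_apply, Matrix.mul_apply,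
    Matrix.smul_apply, smul_eq_mul]
  rw [Finset.sum_comm]
  refine Finset.sum_congr rfl fun r0 _ => ?_
  rw [Finset.sum_comm]
  refine Finset.sum_congr rfl fun rd _ => ?_
  rw [Finset.sum_comm]
  refine Finset.sum_congr rfl fun r _ => Finset.sum_congr rfl fun i _ => ?_
  ring
end

section
/- Given a TT-decomposition of the kernel C^{(d)}, the gain term is a sum of R_1·R_2⋯R_{d−1}-many products of convolutions: Σ_{i_1+...+i_d = k} C^{(d)}_{i_1,...,i_d} n_{i_1}⋯n_{i_d} = Σ_{r_1,...,r_{d−1}} (v^{(1)}_{1,r_1} * v^{(2)}_{r_1,r_2} * ... * v^{(d)}_{r_{d−1},1})_k, where v^{(λ)}_{r_{λ−1},r_λ} ∈ ℝ^N is the vector with entries (v^{(λ)}_{r_{λ−1},r_λ})_i = H^{(λ)}_{r_{λ−1},i,r_λ} n_i and * denotes discrete convolution. -/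
/-- The `d`-fold discrete convolution of a family of vectors `w_1, ..., w_d ∈ ℝ^N`
(indices run over `1,...,N`, encoded as `Fin N` shifted by one):
`(w₁ * ⋯ * w_d)_k = Σ_{i₁+⋯+i_d = k} Π_j (w_j)_{i_j}`. -/
def convFam (d N : ℕ) (w : Fin d → Fin N → ℝ) (k : ℕ) : ℝ :=
  ∑ i : Fin d → Fin N, if (∑ j, ((i j : ℕ) + 1)) = k then ∏ j, w j (i j) else 0


set_option maxHeartbeats 800000 in
lemma chain_sum (N : ℕ) (R : ℕ → ℕ)
    (H : (lam : ℕ) → Fin N → Matrix (Fin (R lam)) (Fin (R (lam + 1))) ℝ) :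
    ∀ (D : ℕ) (i : Fin D → Fin N) (f : Fin (R D) → ℝ),
      ∑ r : (lam : Fin (D + 1)) → Fin (R lam),
        (∏ j : Fin D, H j (i j) (r j.castSucc) (r j.succ)) * f (r (Fin.last D))
      = ∑ a, ∑ b, ttProd N R H D i a b * f b := by
  intro D
  induction D with
  | zero =>
    intro i f
    rw [← (Equiv.piUnique (fun lam : Fin 1 => Fin (R lam))).symm.sum_comp]
    simp only [Finset.univ_unique, Fin.prod_univ_zero, one_mul]
    have hR : ∑ a : Fin (R 0), ∑ b : Fin (R 0), ttProd N R H 0 i a b * f b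
        = ∑ a : Fin (R 0), f a := by simp [ttProd, Matrix.one_apply]
    rw [hR]
    exact Finset.sum_congr rfl fun x _ => rfl
  | succ D ih =>
    intro i f
    rw [← (Fin.snocEquiv (fun lam : Fin (D + 2) => Fin (R lam))).sum_comp]
    rw [Fintype.sum_prod_type]
    have key : ∀ (b : Fin (R (D + 1))) (r' : (lam : Fin (D + 1)) → Fin (R lam)),
        (∏ j : Fin (D + 1),
          H j (i j) (Fin.snocEquiv (fun lam : Fin (D+2) => Fin (R lam)) (b, r') j.castSucc)
            (Fin.snocEquiv (fun lam : Fin (D+2) => Fin (R lam)) (b, r') j.succ))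
          * f (Fin.snocEquiv (fun lam : Fin (D+2) => Fin (R lam)) (b, r') (Fin.last (D+1)))
        = (∏ j : Fin D, H j (i j.castSucc) (r' j.castSucc) (r' j.succ))
            * (H D (i (Fin.last D)) (r' (Fin.last D)) b * f b) := by
      intro b r'
      rw [Fin.prod_univ_castSucc]
      simp only [Fin.snocEquiv, Equiv.coe_fn_mk, Fin.snoc_last]
      have h1 : ∀ j : Fin D, (Fin.snoc r' b : (lam : Fin (D+2)) → Fin (R lam)) j.castSucc.castSucc = r' j.castSucc := fun j => Fin.snoc_castSucc _ _ _
      have h2 : ∀ j : Fin D, (Fin.snoc r' b : (lam : Fin (D+2)) → Fin (R lam)) j.castSucc.succ = r' j.succ := by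
        intro j
        simp only [Fin.succ_castSucc, Fin.snoc_castSucc]
      have h3 : (Fin.snoc r' b : (lam : Fin (D+2)) → Fin (R lam)) (Fin.last D).castSucc = r' (Fin.last D) := Fin.snoc_castSucc _ _ _
      have h5 : (Fin.snoc r' b : (lam : Fin (D+2)) → Fin (R lam)) (Fin.last D).succ = b := Fin.snoc_last _ _
      simp only [h1, h2, h3, h5, Fin.coe_castSucc, Fin.val_last]
      ring
    simp only [key]
    rw [Finset.sum_comm]
    calc ∑ r' : (lam : Fin (D + 1)) → Fin (R lam), ∑ b,
          (∏ j : Fin D, H j (i j.castSucc) (r' j.castSucc) (r' j.succ))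
            * (H D (i (Fin.last D)) (r' (Fin.last D)) b * f b)
        = ∑ r' : (lam : Fin (D + 1)) → Fin (R lam),
          (∏ j : Fin D, H j (i j.castSucc) (r' j.castSucc) (r' j.succ))
            * (∑ b, H D (i (Fin.last D)) (r' (Fin.last D)) b * f b) :=
          Finset.sum_congr rfl fun r' _ => (Finset.mul_sum _ _ _).symm
      _ = ∑ a, ∑ c, ttProd N R H D (fun j => i j.castSucc) a c
            * (∑ b, H D (i (Fin.last D)) c b * f b) :=
          ih (fun j => i j.castSucc) (fun c => ∑ b, H D (i (Fin.last D)) c b * f b)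
      _ = ∑ a, ∑ b, ttProd N R H (D + 1) i a b * f b := by
          refine Finset.sum_congr rfl fun a _ => ?_
          have step : ∀ c, ttProd N R H D (fun j => i j.castSucc) a c
                * (∑ b, H D (i (Fin.last D)) c b * f b)
              = ∑ b, ttProd N R H D (fun j => i j.castSucc) a c
                  * H D (i (Fin.last D)) c b * f b := by
            intro c
            rw [Finset.mul_sum]
            exact Finset.sum_congr rfl fun b _ => (mul_assoc _ _ _).symm
          rw [Finset.sum_congr rfl fun c _ => step c, Finset.sum_comm]
          refine Finset.sum_congr rfl fun b _ => ?_
          show _ = (ttProd N R H D (fun k => i k.castSucc) * H D (i (Fin.last D))) a b * f b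
          rw [Matrix.mul_apply, Finset.sum_mul]

/-- For a kernel in TT-format (`d = e + 1 ≥ 2`), the gain term is a sum over all rank
multi-indices of `d`-fold convolutions of the vectors `(v^{(λ)}_{r_{λ-1},r_λ})_i
= H^{(λ)}_{r_{λ-1},i,r_λ} n_i`. -/
theorem tt_gain_convolution (e N : ℕ) (he : 1 ≤ e) (R : ℕ → ℕ)
    (hR0 : R 0 = 1) (hRd : R (e + 1) = 1)
    (H : (lam : ℕ) → Fin N → Matrix (Fin (R lam)) (Fin (R (lam + 1))) ℝ)
    (n : Fin N → ℝ) :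
    ∀ k : ℕ,
      (∑ i : Fin (e + 1) → Fin N,
        if (∑ j, ((i j : ℕ) + 1)) = k then
          (∑ r0, ∑ rd, ttProd N R H (e + 1) i r0 rd) * ∏ j, n (i j)
        else 0)
        = ∑ r : (lam : Fin (e + 2)) → Fin (R lam),
            convFam (e + 1) N
              (fun lam i => H (lam : ℕ) i (r lam.castSucc) (r lam.succ) * n i) k := by
  intro k
  unfold convFam
  conv_rhs => rw [Finset.sum_comm]
  refine Finset.sum_congr rfl fun i _ => ?_
  have hmain : (∑ r0, ∑ rd, ttProd N R H (e + 1) i r0 rd) * ∏ j, n (i j)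
      = ∑ r : (lam : Fin (e + 2)) → Fin (R lam),
          ∏ lam : Fin (e + 1),
            H (lam : ℕ) (i lam) (r lam.castSucc) (r lam.succ) * n (i lam) := by
    have h := chain_sum N R H (e + 1) i (fun _ => 1)
    simp only [mul_one] at h
    rw [← h, Finset.sum_mul]
    exact Finset.sum_congr rfl fun r _ => (Finset.prod_mul_distrib).symm
  by_cases hc : (∑ j, ((i j : ℕ) + 1)) = k
  · simp only [hc, if_true, hmain]
  · simp [hc]
end
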